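/- Let 0 ≤ r̲ < min{m,n} and let X be an m×n real matrix with rank X > r̲. Then the Frobenius distance from X to the variety of matrices of rank at most r̲ equals sqrt(Σ_{j=r̲+1}^{rank X} σ_j(X)²), where σ_j(X) are the singular values of X. -/

import Mathlib

open Matrix Filter

attribute [local instance] Matrix.frobeniusNormedAddCommGroup Matrix.frobeniusNormedSpace

/-- The set of projections (nearest points in Frobenius norm) of `X` onto `S`. -/
def projSet {m n : ℕ} (S : Set (Matrix (Fin m) (Fin n) ℝ)) (X : Matrix (Fin m) (Fin n) ℝ) :
    Set (Matrix (Fin m) (Fin n) ℝ) :=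
  {Y | Y ∈ S ∧ dist X Y = Metric.infDist X S}

/-- `svalNat A j` is the `(j+1)`-st largest singular value of `A` (0-based indexing):
the square root of the `(j+1)`-st largest eigenvalue of `Aᴴ * A`. -/
noncomputable def svalNat {m n : ℕ} (A : Matrix (Fin m) (Fin n) ℝ) (j : ℕ) : ℝ :=
  if h : j < n then
    Real.sqrt (((Matrix.isHermitian_conjTranspose_mul_self A : (Aᵀ * A).IsHermitian).eigenvalues ∘
      Tuple.sort (Matrix.isHermitian_conjTranspose_mul_self A : (Aᵀ * A).IsHermitian).eigenvalues) (Fin.rev ⟨j, h⟩))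
  else 0

/-- The `Δ`-rank: the number of singular values strictly larger than `Δ`. -/
noncomputable def deltaRank {m n : ℕ} (Δ : ℝ) (A : Matrix (Fin m) (Fin n) ℝ) : ℕ :=
  Set.ncard {j : ℕ | j < min m n ∧ Δ < svalNat A j}

/-- The Bouligand tangent cone to `S` at `X`. -/
def tanCone {m n : ℕ} (S : Set (Matrix (Fin m) (Fin n) ℝ)) (X : Matrix (Fin m) (Fin n) ℝ) :
    Set (Matrix (Fin m) (Fin n) ℝ) :=
  {V | ∃ t : ℕ → ℝ, ∃ W : ℕ → Matrix (Fin m) (Fin n) ℝ,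
    (∀ i, 0 < t i) ∧ Filter.Tendsto t Filter.atTop (nhds 0) ∧
    Filter.Tendsto W Filter.atTop (nhds V) ∧ ∀ i, X + t i • W i ∈ S}

/-- The gradient of `f` at `X`, as a matrix, for the Frobenius inner product. -/
noncomputable def gradMatrix {m n : ℕ} (f : Matrix (Fin m) (Fin n) ℝ → ℝ)
    (X : Matrix (Fin m) (Fin n) ℝ) : Matrix (Fin m) (Fin n) ℝ :=
  fun i j => fderiv ℝ f X (Matrix.single i j 1)

/-- The Frobenius inner product. -/
def frobInner {m n : ℕ} (A B : Matrix (Fin m) (Fin n) ℝ) : ℝ := ∑ i, ∑ j, A i j * B i j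

/-! ### Auxiliary lemmas for Eckart–Young -/

private lemma EY.card_filter_lt (n k : ℕ) (hk : k ≤ n) :
    (Finset.univ.filter (fun i : Fin n => (i : ℕ) < k)).card = k := by
  have : Finset.univ.filter (fun i : Fin n => (i : ℕ) < k)
      = Finset.image (Fin.castLE hk) Finset.univ := by
    ext i
    simp only [Finset.mem_filter, Finset.mem_univ, true_and, Finset.mem_image]
    constructor
    · intro h; exact ⟨⟨i, h⟩, by ext; rfl⟩
    · rintro ⟨j, rfl⟩; exact j.2
  rw [this, Finset.card_image_of_injective _ (Fin.castLE_injective hk)]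
  simp

private lemma EY.maj_lemma {n k : ℕ} (hk : k ≤ n) (ν : Fin n → ℝ) (hν : Monotone ν)
    (c : Fin n → ℝ) (h0 : ∀ i, 0 ≤ c i) (h1 : ∀ i, c i ≤ 1)
    (hsum : ∑ i, c i = k) :
    ∑ i ∈ Finset.univ.filter (fun i : Fin n => (i : ℕ) < k), ν i ≤ ∑ i, ν i * c i := by
  have hcard := EY.card_filter_lt n k hk
  rcases eq_or_lt_of_le hk with heq | hk'
  · have hc : ∀ i, c i = 1 := by
      by_contra h
      push_neg at h
      obtain ⟨i, hi⟩ := h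
      have : ∑ i, c i < ∑ _i : Fin n, (1:ℝ) :=
        Finset.sum_lt_sum (fun j _ => h1 j) ⟨i, Finset.mem_univ i, lt_of_le_of_ne (h1 i) hi⟩
      rw [hsum] at this
      simp [← heq] at this
    have hfil : Finset.univ.filter (fun i : Fin n => (i : ℕ) < k) = Finset.univ := by
      ext i; simp; omega
    rw [hfil]
    refine le_of_eq (Finset.sum_congr rfl fun i _ => ?_)
    rw [hc i, mul_one]
  · set t := ν ⟨k, hk'⟩ with ht
    have key : ∀ i : Fin n, t * c i + (if (i:ℕ) < k then ν i - t else 0) ≤ ν i * c i := by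
      intro i
      by_cases h : (i:ℕ) < k
      · simp only [h, if_pos]
        have hνi : ν i ≤ t := hν (by simp [Fin.le_def]; omega)
        nlinarith [h0 i, h1 i]
      · simp only [h, if_neg, not_false_iff, add_zero]
        have hνi : t ≤ ν i := hν (by simp [Fin.le_def]; omega)
        nlinarith [h0 i]
    calc ∑ i ∈ Finset.univ.filter (fun i : Fin n => (i : ℕ) < k), ν i
        = ∑ i : Fin n, (t * c i + (if (i:ℕ) < k then ν i - t else 0)) := by
          rw [Finset.sum_add_distrib, ← Finset.mul_sum, hsum,
            Finset.sum_ite, Finset.sum_const_zero, add_zero,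
            Finset.sum_sub_distrib, Finset.sum_const, hcard, nsmul_eq_mul]
          ring
      _ ≤ ∑ i, ν i * c i := Finset.sum_le_sum fun i _ => key i

private lemma EY.norm_eq_sqrt {m n : ℕ} (M : Matrix (Fin m) (Fin n) ℝ) :
    ‖M‖ = Real.sqrt (∑ i, ∑ j, M i j ^ 2) := by
  rw [frobenius_norm_def, Real.sqrt_eq_rpow]
  congr 1
  refine Finset.sum_congr rfl fun i _ => Finset.sum_congr rfl fun j _ => ?_
  rw [show (2:ℝ) = ((2:ℕ):ℝ) by norm_num, Real.rpow_natCast]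
  simp [sq_abs]

private lemma EY.trace_tr_mul_self {m n : ℕ} (M : Matrix (Fin m) (Fin n) ℝ) :
    (Mᵀ * M).trace = ∑ i, ∑ j, M i j ^ 2 := by
  simp [Matrix.trace, Matrix.mul_apply, Matrix.diag, sq]
  rw [Finset.sum_comm]

private lemma EY.trace_tr_mul_self_nonneg {m n : ℕ} (M : Matrix (Fin m) (Fin n) ℝ) :
    0 ≤ (Mᵀ * M).trace := by
  rw [EY.trace_tr_mul_self]
  exact Finset.sum_nonneg fun i _ => Finset.sum_nonneg fun j _ => sq_nonneg _

private lemma EY.exists_orthonormal_ker {m n : ℕ} (B : Matrix (Fin m) (Fin n) ℝ) (k : ℕ)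
    (hk : k + B.rank ≤ n) :
    ∃ V₁ : Matrix (Fin n) (Fin k) ℝ, V₁ᵀ * V₁ = 1 ∧ B * V₁ = 0 := by
  set K : Submodule ℝ (EuclideanSpace ℝ (Fin n)) :=
    LinearMap.ker (B.mulVecLin ∘ₗ (WithLp.linearEquiv 2 ℝ (Fin n → ℝ)).toLinearMap) with hK
  have hfinK : k ≤ Module.finrank ℝ K := by
    have h1 : K = Submodule.comap (WithLp.linearEquiv 2 ℝ (Fin n → ℝ)).toLinearMap
        (LinearMap.ker B.mulVecLin) := by
      rw [hK, LinearMap.ker_comp]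
    have h2 : Module.finrank ℝ K = Module.finrank ℝ (LinearMap.ker B.mulVecLin) := by
      rw [h1, Submodule.comap_equiv_eq_map_symm]
      exact LinearEquiv.finrank_map_eq _ _
    have h3 := B.mulVecLin.finrank_range_add_finrank_ker
    have h4 : Module.finrank ℝ (Fin n → ℝ) = n := by simp
    have h5 : B.rank = Module.finrank ℝ (LinearMap.range B.mulVecLin) := rfl
    rw [h4] at h3
    rw [h2]
    omega
  let b := stdOrthonormalBasis ℝ K
  refine ⟨Matrix.of fun i j => ((b (Fin.castLE hfinK j) : K) : EuclideanSpace ℝ (Fin n)) i, ?_, ?_⟩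
  · ext j j'
    rw [Matrix.mul_apply, Matrix.one_apply]
    have horth := b.orthonormal
    rw [orthonormal_iff_ite] at horth
    have hin := horth (Fin.castLE hfinK j) (Fin.castLE hfinK j')
    rw [Submodule.coe_inner, PiLp.inner_apply] at hin
    simp only [RCLike.inner_apply, starRingEnd_apply, star_trivial] at hin
    simp only [Fin.castLE_inj] at hin
    rw [← hin]; exact Finset.sum_congr rfl fun x _ => mul_comm _ _
  · ext i j
    rw [Matrix.mul_apply, Matrix.zero_apply]
    have hmem := (b (Fin.castLE hfinK j)).2
    have h6 : B.mulVec (fun l => ((b (Fin.castLE hfinK j) : K) : EuclideanSpace ℝ (Fin n)) l)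
        = 0 := hmem
    exact congrFun h6 i

theorem stmt3 {m n : ℕ} (r' : ℕ) (hr : r' < min m n) (X : Matrix (Fin m) (Fin n) ℝ)
    (hrank : r' < X.rank) :
    Metric.infDist X {A : Matrix (Fin m) (Fin n) ℝ | A.rank ≤ r'} =
      Real.sqrt (∑ j ∈ Finset.Ico r' X.rank, svalNat X j ^ 2) := by
  have hn : r' < n := lt_of_lt_of_le hr (min_le_right m n)
  -- spectral setup
  have hH : (Xᵀ * X).IsHermitian := Matrix.isHermitian_conjTranspose_mul_self X
  set e : Fin n → ℝ := hH.eigenvalues with he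
  set σ : Equiv.Perm (Fin n) := Tuple.sort e with hσ
  set W : Matrix (Fin n) (Fin n) ℝ := (hH.eigenvectorUnitary : Matrix (Fin n) (Fin n) ℝ) with hW
  have hst : star W = Wᵀ := by
    rw [Matrix.star_eq_conjTranspose]
    ext i j; simp [conjTranspose_apply]
  have hWWt : W * Wᵀ = 1 := by
    rw [← hst]; exact Matrix.mem_unitaryGroup_iff.mp hH.eigenvectorUnitary.2
  have hWtW : Wᵀ * W = 1 := by
    rw [← hst]; exact Matrix.mem_unitaryGroup_iff'.mp hH.eigenvectorUnitary.2
  have hspec : Xᵀ * X = W * diagonal e * Wᵀ := by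
    have := hH.spectral_theorem
    rw [Unitary.conjStarAlgAut_apply, hst] at this
    exact this
  have henneg : ∀ i, 0 ≤ e i := fun i => by
    have : (Xᵀ * X).PosSemidef := by
      have := Matrix.posSemidef_conjTranspose_mul_self X
      simpa [Matrix.conjTranspose_eq_transpose_of_trivial] using this
    exact this.eigenvalues_nonneg i
  -- descending singular values (squared)
  set dsc : Fin n → ℝ := fun l => e (σ l.rev) with hdsc
  have hsval2 : ∀ (j : ℕ) (h : j < n), svalNat X j ^ 2 = dsc ⟨j, h⟩ := by
    intro j h
    rw [svalNat, dif_pos h]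
    exact Real.sq_sqrt (henneg _)
  have hdsc_nonneg : ∀ l, 0 ≤ dsc l := fun l => henneg _
  -- the target quantity
  set s : ℝ := ∑ l ∈ Finset.univ.filter (fun l : Fin n => r' ≤ (l : ℕ)), dsc l with hs
  have hs0 : 0 ≤ s := Finset.sum_nonneg fun l _ => hdsc_nonneg l
  -- singular values of index ≥ rank vanish
  have hrankn : X.rank ≤ n := by
    have := X.rank_le_card_width
    simpa using this
  have hzero : ∀ l : Fin n, X.rank ≤ (l : ℕ) → dsc l = 0 := by
    intro l hl
    by_contra hne
    have hpos : 0 < dsc l := lt_of_le_of_ne (hdsc_nonneg l) (Ne.symm hne)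
    have hmono := Tuple.monotone_sort e
    have hall : ∀ l' : Fin n, l' ≤ l → dsc l' ≠ 0 := by
      intro l' hl'
      have : dsc l ≤ dsc l' := by
        exact hmono (Fin.rev_le_rev.mpr hl')
      exact ne_of_gt (lt_of_lt_of_le hpos this)
    have hcard1 : Fintype.card {i // e i ≠ 0} = X.rank := by
      rw [← hH.rank_eq_card_non_zero_eigs, Matrix.rank_transpose_mul_self]
    have hinj : Function.Injective
        (fun l' : {l' : Fin n // l' ≤ l} => (⟨σ l'.1.rev, hall l'.1 l'.2⟩ : {i // e i ≠ 0})) := by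
      intro a b hab
      simp only [Subtype.mk_eq_mk] at hab
      have := σ.injective hab
      have := Fin.rev_injective this
      exact Subtype.ext this
    have hcard2 : Fintype.card {l' : Fin n // l' ≤ l} = (l : ℕ) + 1 := by
      have heq : ∀ l' : Fin n, l' ≤ l ↔ (l' : ℕ) < (l : ℕ) + 1 := by
        intro l'; rw [Fin.le_def]; omega
      rw [Fintype.card_subtype]
      rw [show (Finset.univ.filter (fun l' : Fin n => l' ≤ l))
          = Finset.univ.filter (fun l' : Fin n => (l' : ℕ) < (l : ℕ) + 1) by
        ext l'; simp only [Finset.mem_filter, Finset.mem_univ, true_and, heq]]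
      exact EY.card_filter_lt n _ (by omega)
    have := Fintype.card_le_of_injective _ hinj
    rw [hcard1, hcard2] at this
    omega
  -- rewrite the RHS sum as s
  have hsum_eq : ∑ j ∈ Finset.Ico r' X.rank, svalNat X j ^ 2 = s := by
    have h1 : ∑ j ∈ Finset.Ico r' X.rank, svalNat X j ^ 2
        = ∑ j ∈ Finset.Ico r' n, svalNat X j ^ 2 := by
      refine Finset.sum_subset (Finset.Ico_subset_Ico_right hrankn) ?_
      intro j hj hj'
      simp only [Finset.mem_Ico] at hj hj'
      have hjr : X.rank ≤ j := by omega
      rw [hsval2 j hj.2, hzero ⟨j, hj.2⟩ hjr]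
    rw [h1, hs]
    refine Finset.sum_bij' (fun (j : ℕ) (hj : j ∈ Finset.Ico r' n) =>
        (⟨j, (Finset.mem_Ico.mp hj).2⟩ : Fin n))
      (fun (l : Fin n) (_ : l ∈ Finset.univ.filter (fun l : Fin n => r' ≤ (l:ℕ))) => (l : ℕ))
      ?_ ?_ ?_ ?_ ?_
    · intro j hj
      simp only [Finset.mem_Ico] at hj
      simp [hj.1]
    · intro l hl
      simp only [Finset.mem_filter, Finset.mem_univ, true_and] at hl
      simp [Finset.mem_Ico, hl, l.isLt]
    · intro j hj
      rfl
    · intro l hl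
      rfl
    · intro j hj
      exact hsval2 j (Finset.mem_Ico.mp hj).2
  rw [hsum_eq]
  -- the low-rank set is nonempty
  have hSne : {A : Matrix (Fin m) (Fin n) ℝ | A.rank ≤ r'}.Nonempty :=
    ⟨0, by simp [Set.mem_setOf_eq, Matrix.rank_zero]⟩
  -- ### Upper bound: truncated SVD
  set p : Fin n → ℝ := fun i => if ((σ.symm i).rev : ℕ) < r' then 1 else 0 with hp
  set q : Fin n → ℝ := fun i => if r' ≤ ((σ.symm i).rev : ℕ) then 1 else 0 with hq
  have hpq : ∀ i, p i + q i = 1 := by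
    intro i
    simp only [hp, hq]
    by_cases h : ((σ.symm i).rev : ℕ) < r'
    · rw [if_pos h, if_neg (by omega)]; norm_num
    · rw [if_neg h, if_pos (by omega)]; norm_num
  set A : Matrix (Fin m) (Fin n) ℝ := X * W * diagonal p * Wᵀ with hA
  have hτ : ∀ i : Fin n, (σ.symm.trans Fin.revPerm) i = (σ.symm i).rev := fun i => rfl
  have hrankA : A.rank ≤ r' := by
    calc A.rank ≤ (X * W * diagonal p).rank := Matrix.rank_mul_le_left _ _
      _ ≤ (diagonal p).rank := Matrix.rank_mul_le_right _ _
      _ ≤ r' := by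
          rw [Matrix.rank_diagonal]
          have hiff : ∀ i : Fin n, p i ≠ 0 ↔ (((σ.symm.trans Fin.revPerm) i : Fin n) : ℕ) < r' := by
            intro i
            by_cases h : ((σ.symm i).rev : ℕ) < r' <;> simp [hp, h, hτ]
          rw [Fintype.card_congr (Equiv.subtypeEquiv (q := fun l : Fin n => (l:ℕ) < r') (σ.symm.trans Fin.revPerm) hiff)]
          rw [Fintype.card_subtype]
          rw [EY.card_filter_lt n r' hn.le]
  -- distance from X to A
  have hXA : X - A = X * W * diagonal q * Wᵀ := by
    have h1 : diagonal p + diagonal q = 1 := by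
      rw [Matrix.diagonal_add]
      have : (fun i => p i + q i) = fun _ => (1:ℝ) := funext hpq
      rw [this, Matrix.diagonal_one]
    have hX1 : X = X * W * (diagonal p + diagonal q) * Wᵀ := by
      rw [h1, Matrix.mul_one, Matrix.mul_assoc, hWWt, Matrix.mul_one]
    calc X - A = X * W * (diagonal p + diagonal q) * Wᵀ - X * W * diagonal p * Wᵀ := by
          rw [← hX1, hA]
      _ = X * W * diagonal q * Wᵀ := by
          rw [Matrix.mul_add, Matrix.add_mul]
          abel
  have hqsq : ∀ i, q i * e i * q i = q i * e i := by
    intro i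
    simp only [hq]
    split_ifs <;> ring
  have htraceA : ((X - A)ᵀ * (X - A)).trace = s := by
    rw [hXA]
    have ht : (X * W * diagonal q * Wᵀ)ᵀ = W * diagonal q * Wᵀ * Xᵀ := by
      simp only [Matrix.transpose_mul, Matrix.diagonal_transpose,
        Matrix.transpose_transpose, Matrix.mul_assoc]
    rw [ht]
    have hmid : W * diagonal q * Wᵀ * Xᵀ * (X * W * diagonal q * Wᵀ)
        = W * (diagonal q * diagonal e * diagonal q) * Wᵀ := by
      have hXtX : Wᵀ * (Xᵀ * X) * W = diagonal e := by
        rw [hspec]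
        calc Wᵀ * (W * diagonal e * Wᵀ) * W = Wᵀ * W * diagonal e * (Wᵀ * W) := by
              simp only [Matrix.mul_assoc]
          _ = diagonal e := by rw [hWtW, Matrix.one_mul, Matrix.mul_one]
      calc W * diagonal q * Wᵀ * Xᵀ * (X * W * diagonal q * Wᵀ)
          = W * diagonal q * (Wᵀ * (Xᵀ * X) * W) * (diagonal q * Wᵀ) := by
            simp only [Matrix.mul_assoc]
        _ = W * (diagonal q * diagonal e * diagonal q) * Wᵀ := by
            rw [hXtX]; simp only [Matrix.mul_assoc]
    rw [hmid, Matrix.trace_mul_cycle, hWtW, Matrix.one_mul]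
    rw [Matrix.diagonal_mul_diagonal, Matrix.diagonal_mul_diagonal, Matrix.trace_diagonal]
    rw [Finset.sum_congr rfl fun i _ => hqsq i]
    -- now reindex: ∑ i, q i * e i = s
    have : ∀ i : Fin n, q i * e i = if r' ≤ ((σ.symm i).rev : ℕ) then e i else 0 := by
      intro i
      simp only [hq]
      split_ifs <;> ring
    rw [Finset.sum_congr rfl fun i _ => this i, Finset.sum_ite, Finset.sum_const_zero, add_zero]
    rw [hs]
    refine Finset.sum_equiv (σ.symm.trans Fin.revPerm) ?_ ?_
    · intro i
      simp only [Finset.mem_filter, Finset.mem_univ, true_and, Equiv.trans_apply,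
        Fin.revPerm_apply]
    · intro i _
      simp only [hdsc, Equiv.trans_apply, Fin.revPerm_apply, Fin.rev_rev,
        Equiv.apply_symm_apply]
  have hdistA : dist X A = Real.sqrt s := by
    rw [dist_eq_norm, EY.norm_eq_sqrt, ← EY.trace_tr_mul_self, htraceA]
  have hub : Metric.infDist X {B : Matrix (Fin m) (Fin n) ℝ | B.rank ≤ r'} ≤ Real.sqrt s := by
    calc Metric.infDist X {B : Matrix (Fin m) (Fin n) ℝ | B.rank ≤ r'} ≤ dist X A :=
          Metric.infDist_le_dist_of_mem hrankA
      _ = Real.sqrt s := hdistA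
  -- ### Lower bound
  have hlb : ∀ B : Matrix (Fin m) (Fin n) ℝ, B.rank ≤ r' → Real.sqrt s ≤ dist X B := by
    intro B hB
    set k := n - r' with hkdef
    have hkn : k ≤ n := Nat.sub_le n r'
    obtain ⟨V₁, hV1tV1, hBV1⟩ := EY.exists_orthonormal_ker B k (by omega)
    obtain ⟨M, hM⟩ : ∃ M : Matrix (Fin m) (Fin n) ℝ, M = X - B := ⟨_, rfl⟩
    have hMV1 : M * V₁ = X * V₁ := by
      rw [hM, Matrix.sub_mul, hBV1, sub_zero]
    -- trace (V₁ᵀ Mᵀ M V₁)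
    set C : Matrix (Fin n) (Fin k) ℝ := Wᵀ * V₁ with hC
    have hCtC : Cᵀ * C = 1 := by
      rw [hC, Matrix.transpose_mul, Matrix.transpose_transpose]
      calc V₁ᵀ * W * (Wᵀ * V₁) = V₁ᵀ * (W * Wᵀ) * V₁ := by simp only [Matrix.mul_assoc]
        _ = 1 := by rw [hWWt, Matrix.mul_one, hV1tV1]
    set c : Fin n → ℝ := fun l => (C * Cᵀ) l l with hc
    have hcapp : ∀ l, c l = (C * Cᵀ) l l := fun l => by simp only [hc]
    have hc0 : ∀ l, 0 ≤ c l := by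
      intro l
      rw [hcapp, Matrix.mul_apply]
      exact Finset.sum_nonneg fun j _ => by
        rw [Matrix.transpose_apply]; exact mul_self_nonneg _
    have hP : (C * Cᵀ) * (C * Cᵀ) = C * Cᵀ := by
      calc (C * Cᵀ) * (C * Cᵀ) = C * (Cᵀ * C) * Cᵀ := by simp only [Matrix.mul_assoc]
        _ = C * Cᵀ := by rw [hCtC, Matrix.mul_one]
    have hc1 : ∀ l, c l ≤ 1 := by
      intro l
      have hsym : ∀ a b1, (C * Cᵀ) a b1 = (C * Cᵀ) b1 a := by
        intro a b1
        have hT : (C * Cᵀ)ᵀ = C * Cᵀ := by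
          rw [Matrix.transpose_mul, Matrix.transpose_transpose]
        conv_lhs => rw [← hT]
        rw [Matrix.transpose_apply]
      have hdiag : ∑ j, ((C * Cᵀ) l j)^2 = c l := by
        rw [hcapp]
        conv_rhs => rw [← hP]
        rw [Matrix.mul_apply]
        refine Finset.sum_congr rfl fun j _ => ?_
        rw [hsym l j]
        ring
      have h5 : ((C * Cᵀ) l l)^2 ≤ ∑ j, ((C * Cᵀ) l j)^2 :=
        Finset.single_le_sum (f := fun j => ((C * Cᵀ) l j)^2)
          (fun j _ => sq_nonneg _) (Finset.mem_univ l)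
      have hge : (c l)^2 ≤ c l :=
        calc (c l)^2 = ((C * Cᵀ) l l)^2 := by rw [hcapp]
          _ ≤ ∑ j, ((C * Cᵀ) l j)^2 := h5
          _ = c l := hdiag
      nlinarith [hc0 l]
    have hcsum : ∑ l, c l = k := by
      have : ∑ l, c l = (C * Cᵀ).trace := rfl
      rw [this, Matrix.trace_mul_comm, hCtC, Matrix.trace_one]
      simp
    -- trace identity
    have htr1 : (V₁ᵀ * (Mᵀ * M) * V₁).trace = ∑ l, e l * c l := by
      have h1 : V₁ᵀ * (Mᵀ * M) * V₁ = Cᵀ * diagonal e * C := by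
        have h2 : V₁ᵀ * (Mᵀ * M) * V₁ = (M * V₁)ᵀ * (M * V₁) := by
          rw [Matrix.transpose_mul]
          simp only [Matrix.mul_assoc]
        have h3 : (X * V₁)ᵀ * (X * V₁) = V₁ᵀ * (Xᵀ * X) * V₁ := by
          rw [Matrix.transpose_mul]
          simp only [Matrix.mul_assoc]
        rw [h2, hMV1, h3, hspec, hC]
        simp only [Matrix.transpose_mul, Matrix.transpose_transpose,
          Matrix.diagonal_transpose, Matrix.mul_assoc]
      rw [h1, Matrix.trace_mul_cycle, Matrix.trace]
      refine Finset.sum_congr rfl fun l _ => ?_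
      rw [Matrix.diag_apply, hc]
      have : (C * Cᵀ * diagonal e) l l = (C * Cᵀ) l l * e l := Matrix.mul_diagonal _ _ _ _
      rw [this]
      ring
    -- lower bound on trace via majorization
    have hmaj : s ≤ ∑ l, e l * c l := by
      have hresum : ∑ l, e l * c l = ∑ l, e (σ l) * c (σ l) :=
        (Equiv.sum_comp σ (fun l => e l * c l)).symm
      have hcomp : ∑ l, (c ∘ σ) l = (k:ℝ) := by
        rw [show ∑ l, (c ∘ σ) l = ∑ l, c (σ l) from rfl, Equiv.sum_comp σ c, hcsum]
      have hm := EY.maj_lemma hkn (e ∘ σ) (Tuple.monotone_sort e) (c ∘ σ)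
        (fun i => hc0 _) (fun i => hc1 _) hcomp
      have hseq : s = ∑ i ∈ Finset.univ.filter (fun i : Fin n => (i : ℕ) < k), (e ∘ σ) i := by
        rw [hs]
        refine (Finset.sum_equiv Fin.revPerm ?_ ?_).symm
        · intro i
          simp only [Finset.mem_filter, Finset.mem_univ, true_and, Fin.revPerm_apply]
          rw [Fin.val_rev]
          omega
        · intro i _
          simp [hdsc, Fin.rev_rev]
      rw [hseq, hresum]
      exact hm
    -- trace monotonicity: tr(V₁ᵀ S V₁) ≤ tr(S)
    have htr2 : (V₁ᵀ * (Mᵀ * M) * V₁).trace ≤ (Mᵀ * M).trace := by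
      set G : Matrix (Fin n) (Fin n) ℝ := 1 - V₁ * V₁ᵀ with hG
      have hGt : Gᵀ = G := by
        rw [hG, Matrix.transpose_sub, Matrix.transpose_one, Matrix.transpose_mul,
          Matrix.transpose_transpose]
      have hGG : G * G = G := by
        rw [hG]
        simp only [Matrix.mul_sub, Matrix.sub_mul, Matrix.mul_one, Matrix.one_mul]
        have hPP : V₁ * V₁ᵀ * (V₁ * V₁ᵀ) = V₁ * V₁ᵀ := by
          calc V₁ * V₁ᵀ * (V₁ * V₁ᵀ) = V₁ * (V₁ᵀ * V₁) * V₁ᵀ := by simp only [Matrix.mul_assoc]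
            _ = V₁ * V₁ᵀ := by rw [hV1tV1, Matrix.mul_one]
        rw [hPP]
        abel
      have hdiff : (Mᵀ * M).trace - (V₁ᵀ * (Mᵀ * M) * V₁).trace = ((M * G)ᵀ * (M * G)).trace := by
        have h1 : (V₁ᵀ * (Mᵀ * M) * V₁).trace = ((Mᵀ * M) * (V₁ * V₁ᵀ)).trace := by
          rw [Matrix.trace_mul_cycle, Matrix.trace_mul_comm]
        have h2 : (Mᵀ * M).trace - ((Mᵀ * M) * (V₁ * V₁ᵀ)).trace = ((Mᵀ * M) * G).trace := by
          rw [hG, Matrix.mul_sub, Matrix.mul_one, Matrix.trace_sub]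
        have h3 : ((Mᵀ * M) * G).trace = ((M * G)ᵀ * (M * G)).trace := by
          calc ((Mᵀ * M) * G).trace = ((Mᵀ * M) * (G * G)).trace := by rw [hGG]
            _ = (((Mᵀ * M) * G) * G).trace := by simp only [Matrix.mul_assoc]
            _ = (G * ((Mᵀ * M) * G)).trace := Matrix.trace_mul_comm _ _
            _ = ((M * G)ᵀ * (M * G)).trace := by
                rw [Matrix.transpose_mul, hGt]
                simp only [Matrix.mul_assoc]
        rw [h1, h2, h3]
      have hnn := EY.trace_tr_mul_self_nonneg (M * G)
      linarith
    -- assemble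
    have hchain : s ≤ (Mᵀ * M).trace := by
      calc s ≤ ∑ l, e l * c l := hmaj
        _ = (V₁ᵀ * (Mᵀ * M) * V₁).trace := htr1.symm
        _ ≤ (Mᵀ * M).trace := htr2
    rw [dist_eq_norm, EY.norm_eq_sqrt]
    rw [← hM]
    rw [← EY.trace_tr_mul_self]
    exact Real.sqrt_le_sqrt hchain
  refine le_antisymm hub ?_
  rw [Metric.infDist_eq_iInf]
  have : Nonempty {B : Matrix (Fin m) (Fin n) ℝ // B ∈ {A : Matrix (Fin m) (Fin n) ℝ | A.rank ≤ r'}} :=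
    hSne.to_subtype
  exact le_ciInf fun y => hlb y y.2
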